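/- Let γ be a constant curvature curve of ℍ that is not a hyperbolic circle. Then there exists a family (γ_x)_{x ∈ γ} of constant curvature curves of ℍ such that γ ∩ γ_x = {x} for every x ∈ γ, and γ_x ∩ γ_y = ∅ for all distinct x, y ∈ γ. -/
import Mathlib

open Complex

lemma key_quad (a d : ℂ) (t : ℝ) (hd : d ≠ 0)
    (h1 : Complex.normSq a = Complex.normSq (a + d))
    (h2 : Complex.normSq a = Complex.normSq (a + t • d)) : t = 0 ∨ t = 1 := by
  have hS : 0 < d.re ^ 2 + d.im ^ 2 := by
    have : d.re ≠ 0 ∨ d.im ≠ 0 := by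
      by_contra hc; push_neg at hc; exact hd (Complex.ext hc.1 hc.2)
    rcases this with h | h <;> positivity
  simp only [Complex.normSq_apply, Complex.add_re, Complex.add_im,
    Complex.smul_re, Complex.smul_im, smul_eq_mul] at h1 h2
  have hmul : t * (t - 1) * (d.re ^ 2 + d.im ^ 2) = 0 := by linear_combination t * h1 - h2
  rcases mul_eq_zero.mp hmul with h | h
  · rcases mul_eq_zero.mp h with h | h
    · exact Or.inl h
    · exact Or.inr (by linarith)
  · exact absurd h (ne_of_gt hS)

lemma sphere_line (c : ℂ) (ρ : ℝ) (p x z : ℂ) (t : ℝ)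
    (hp : p ∈ Metric.sphere c ρ) (hx : x ∈ Metric.sphere c ρ) (hpx : x ≠ p)
    (hz : z ∈ Metric.sphere c ρ) (ht : z = p + t • (x - p)) : z = p ∨ z = x := by
  have nsq : ∀ w : ℂ, w ∈ Metric.sphere c ρ → Complex.normSq (w - c) = ρ ^ 2 := by
    intro w hw
    rw [Metric.mem_sphere, Complex.dist_eq] at hw
    rw [← Complex.sq_norm, hw]
  have h1 : Complex.normSq (p - c) = Complex.normSq ((p - c) + (x - p)) := by
    rw [nsq p hp]; rw [show (p - c) + (x - p) = x - c by ring, nsq x hx]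
  have h2 : Complex.normSq (p - c) = Complex.normSq ((p - c) + t • (x - p)) := by
    rw [nsq p hp]
    have : (p - c) + t • (x - p) = z - c := by rw [ht]; ring
    rw [this, nsq z hz]
  rcases key_quad (p - c) (x - p) t (sub_ne_zero.mpr hpx) h1 h2 with h | h
  · left; rw [ht, h]; simp
  · right; rw [ht, h]; simp

theorem non_circle_has_disjoint_tangent_family'
    (γ : Set UpperHalfPlane)
    (hγ : ∃ C : Set ℂ,
      ((∃ (c : ℂ) (ρ : ℝ), 0 < ρ ∧ C = Metric.sphere c ρ) ∨
       (∃ p v : ℂ, v ≠ 0 ∧ C = {z : ℂ | ∃ t : ℝ, z = p + t • v})) ∧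
      (∃ z : UpperHalfPlane, (z : ℂ) ∈ C) ∧ γ = {z : UpperHalfPlane | (z : ℂ) ∈ C})
    (hnc : ¬ ∃ (c : ℂ) (ρ : ℝ), 0 < ρ ∧ (∀ z ∈ Metric.sphere c ρ, 0 < z.im) ∧
      γ = {z : UpperHalfPlane | (z : ℂ) ∈ Metric.sphere c ρ}) :
    ∃ F : UpperHalfPlane → Set UpperHalfPlane,
      (∀ x ∈ γ, (∃ C : Set ℂ,
        ((∃ (c : ℂ) (ρ : ℝ), 0 < ρ ∧ C = Metric.sphere c ρ) ∨
         (∃ p v : ℂ, v ≠ 0 ∧ C = {z : ℂ | ∃ t : ℝ, z = p + t • v})) ∧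
        (∃ z : UpperHalfPlane, (z : ℂ) ∈ C) ∧ F x = {z : UpperHalfPlane | (z : ℂ) ∈ C}) ∧
        γ ∩ F x = {x}) ∧
      (∀ x ∈ γ, ∀ y ∈ γ, x ≠ y → F x ∩ F y = ∅) := by
  obtain ⟨C, hC, ⟨z0, hz0⟩, hγe⟩ := hγ
  rcases hC with ⟨c, ρ, hρ, rfl⟩ | ⟨p, v, hv, rfl⟩
  · -- circle case
    have hp : ∃ p ∈ Metric.sphere c ρ, p.im ≤ 0 := by
      by_contra h; push_neg at h
      exact hnc ⟨c, ρ, hρ, h, hγe⟩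
    obtain ⟨p, hpS, hpim⟩ := hp
    have hne : ∀ z : UpperHalfPlane, (z : ℂ) ≠ p := by
      intro z hz
      have := z.im_pos
      rw [← UpperHalfPlane.coe_im, hz] at this
      linarith
    refine ⟨fun x => {z : UpperHalfPlane | ∃ t : ℝ, (z : ℂ) = p + t • ((x : ℂ) - p)}, ?_, ?_⟩
    · intro x hx
      have hxS : (x : ℂ) ∈ Metric.sphere c ρ := by rw [hγe] at hx; exact hx
      constructor
      · refine ⟨{w : ℂ | ∃ t : ℝ, w = p + t • ((x : ℂ) - p)},
          Or.inr ⟨p, (x : ℂ) - p, sub_ne_zero.mpr (hne x), rfl⟩, ⟨x, ⟨1, by simp⟩⟩, rfl⟩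
      · ext z
        simp only [Set.mem_inter_iff, Set.mem_setOf_eq, Set.mem_singleton_iff]
        constructor
        · rintro ⟨hzγ, t, hzt⟩
          have hzS : (z : ℂ) ∈ Metric.sphere c ρ := by rw [hγe] at hzγ; exact hzγ
          rcases sphere_line c ρ p (x : ℂ) (z : ℂ) t hpS hxS (hne x) hzS hzt with h | h
          · exact absurd h (hne z)
          · exact UpperHalfPlane.ext h
        · rintro rfl
          exact ⟨hx, ⟨1, by simp⟩⟩
    · intro x hx y hy hxy
      have hxS : (x : ℂ) ∈ Metric.sphere c ρ := by rw [hγe] at hx; exact hx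
      have hyS : (y : ℂ) ∈ Metric.sphere c ρ := by rw [hγe] at hy; exact hy
      ext z
      simp only [Set.mem_inter_iff, Set.mem_setOf_eq, Set.mem_empty_iff_false, iff_false]
      rintro ⟨⟨t, hzt⟩, ⟨s, hzs⟩⟩
      have ht0 : t ≠ 0 := by
        rintro rfl
        exact hne z (by simpa using hzt)
      have hline : (x : ℂ) = p + (s / t) • ((y : ℂ) - p) := by
        have h1 : (t : ℂ) * ((x : ℂ) - p) = (s : ℂ) * ((y : ℂ) - p) := by
          rw [Complex.real_smul] at hzt hzs
          linear_combination hzs - hzt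
        have htc : (t : ℂ) ≠ 0 := by exact_mod_cast ht0
        rw [Complex.real_smul]
        push_cast
        field_simp
        linear_combination h1
      rcases sphere_line c ρ p (y : ℂ) (x : ℂ) (s / t) hpS hyS (hne y) hxS hline with h | h
      · exact hne x h
      · exact hxy (UpperHalfPlane.ext h)
  · -- line case
    refine ⟨fun x => {z : UpperHalfPlane | ∃ t : ℝ, (z : ℂ) = (x : ℂ) + t • (Complex.I * v)},
      ?_, ?_⟩
    · intro x hx
      rw [hγe] at hx
      obtain ⟨s, hxs⟩ := hx
      constructor
      · exact ⟨{w : ℂ | ∃ t : ℝ, w = (x : ℂ) + t • (Complex.I * v)},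
          Or.inr ⟨(x : ℂ), Complex.I * v, mul_ne_zero Complex.I_ne_zero hv, rfl⟩,
          ⟨x, ⟨0, by simp⟩⟩, rfl⟩
      · ext z
        simp only [Set.mem_inter_iff, Set.mem_setOf_eq, Set.mem_singleton_iff]
        constructor
        · rintro ⟨hzγ, u, hzu⟩
          rw [hγe] at hzγ
          obtain ⟨t, hzt⟩ := hzγ
          have hcan : (t : ℂ) = (s : ℂ) + (u : ℂ) * Complex.I := by
            have h3 : (t : ℂ) * v = ((s : ℂ) + (u : ℂ) * Complex.I) * v := by
              rw [Complex.real_smul] at hzt hzu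
              rw [Complex.real_smul] at hxs
              linear_combination hzu + hxs - hzt
            exact mul_right_cancel₀ hv h3
          have hu : u = 0 := by
            have := congrArg Complex.im hcan
            simpa using this.symm
          apply UpperHalfPlane.ext
          rw [hzu, hu]; simp
        · rintro rfl
          refine ⟨by rw [hγe]; exact ⟨s, hxs⟩, ⟨0, by simp⟩⟩
    · intro x hx y hy hxy
      rw [hγe] at hx hy
      obtain ⟨s, hxs⟩ := hx
      obtain ⟨s', hys⟩ := hy
      ext z
      simp only [Set.mem_inter_iff, Set.mem_setOf_eq, Set.mem_empty_iff_false, iff_false]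
      rintro ⟨⟨u, hzu⟩, ⟨u', hzu'⟩⟩
      have hcan : (s : ℂ) + (u : ℂ) * Complex.I = (s' : ℂ) + (u' : ℂ) * Complex.I := by
        have h3 : ((s : ℂ) + (u : ℂ) * Complex.I) * v
            = ((s' : ℂ) + (u' : ℂ) * Complex.I) * v := by
          rw [Complex.real_smul] at hzu hzu' hxs hys
          linear_combination hzu' - hzu + hys - hxs
        exact mul_right_cancel₀ hv h3
      have hss : s = s' := by
        have := congrArg Complex.re hcan
        simpa using this
      apply hxy
      apply UpperHalfPlane.ext
      rw [hxs, hys, hss]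


/-- A generalized circle in `ℂ`: either a Euclidean circle of positive radius, or a
Euclidean line (a coset of a one-dimensional `ℝ`-subspace of `ℂ`). -/
def IsGenCircle (C : Set ℂ) : Prop :=
  (∃ (c : ℂ) (ρ : ℝ), 0 < ρ ∧ C = Metric.sphere c ρ) ∨
  (∃ p v : ℂ, v ≠ 0 ∧ C = {z : ℂ | ∃ t : ℝ, z = p + t • v})

/-- A constant curvature curve of `ℍ`: the trace on `ℍ` of a generalized circle in `ℂ` that
meets the upper half-plane. -/
def IsCCC (γ : Set UpperHalfPlane) : Prop :=
  ∃ C : Set ℂ, IsGenCircle C ∧ (∃ z : UpperHalfPlane, (z : ℂ) ∈ C) ∧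
    γ = {z : UpperHalfPlane | (z : ℂ) ∈ C}

/-- A hyperbolic circle of `ℍ`: the trace on `ℍ` of a Euclidean circle entirely contained
in the open upper half-plane. -/
def IsHypCircle (γ : Set UpperHalfPlane) : Prop :=
  ∃ (c : ℂ) (ρ : ℝ), 0 < ρ ∧ (∀ z ∈ Metric.sphere c ρ, 0 < z.im) ∧
    γ = {z : UpperHalfPlane | (z : ℂ) ∈ Metric.sphere c ρ}

/-- For a constant curvature curve `γ` that is not a hyperbolic circle, there is a family of
pairwise disjoint constant curvature curves `γ_x`, each meeting `γ` exactly at `x`. -/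
theorem non_circle_has_disjoint_tangent_family
    (γ : Set UpperHalfPlane) (hγ : IsCCC γ) (hnc : ¬ IsHypCircle γ) :
    ∃ F : UpperHalfPlane → Set UpperHalfPlane,
      (∀ x ∈ γ, IsCCC (F x) ∧ γ ∩ F x = {x}) ∧
      (∀ x ∈ γ, ∀ y ∈ γ, x ≠ y → F x ∩ F y = ∅) := by
  exact non_circle_has_disjoint_tangent_family' γ hγ hnc
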